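/- arXiv:2605.04438 — 5 statements merged into one kernel-verified Lean document; each statement's English description precedes it below -/
import Mathlib

section
/- Let G be a graph on n vertices with minimum degree δ. Then the spectral radius ρ(G) of its adjacency matrix satisfies ρ(G) ≤ (δ-1)/2 + sqrt(2e(G) - δn + (δ+1)²/4), where e(G) is the number of edges of G. -/
/-!
Let `y` be an eigenvector for the largest eigenvalue `ρ`. Since `A` is entrywise nonnegative, `|y|`
has Rayleigh quotient at least `ρ`, so it lies in the kernel of the positive semidefinite
`ρ • 1 - A`: there is a nonnegative eigenvector `x` for `ρ`. Summing `A x = ρ x` over all vertices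
gives `∑ (d w - δ) x w = (ρ - δ) ∑ x w`. For `u` maximizing `x`,
`(ρ - δ)(ρ + 1) x u = (ρ - δ)(x u + ∑_{w ~ u} x w) ≤ (ρ - δ) ∑ x w = ∑ (d w - δ) x w ≤ (2e - δn) x u`,
and completing the square in `(ρ - δ)(ρ + 1) ≤ 2e - δn` gives the bound.
-/

open SimpleGraph Finset
open scoped Classical

lemma adjMatrix_isHermitian {V : Type*} [Fintype V] (G : SimpleGraph V)
    [DecidableRel G.Adj] : (G.adjMatrix ℝ).IsHermitian := by
  ext i j
  simp [Matrix.conjTranspose_apply, SimpleGraph.adjMatrix_apply, SimpleGraph.adj_comm]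

/-- The spectral radius of a graph: the largest eigenvalue of its adjacency matrix. -/
noncomputable def specRad {n : ℕ} (G : SimpleGraph (Fin n)) : ℝ := by
  classical
  exact ⨆ i, (adjMatrix_isHermitian G).eigenvalues i

open Matrix

namespace Matrix

variable {ι : Type*} [Fintype ι] {A : Matrix ι ι ℝ}

open scoped MatrixOrder in
theorem IsHermitian.posSemidef_smul_one_sub [DecidableEq ι] (hA : A.IsHermitian) {r : ℝ}
    (hr : ∀ i, hA.eigenvalues i ≤ r) : (r • 1 - A).PosSemidef := by
  rw [← Algebra.algebraMap_eq_smul_one]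
  refine le_algebraMap_of_spectrum_le ?_ hA.isSelfAdjoint
  rw [hA.spectrum_real_eq_range_eigenvalues]
  rintro _ ⟨i, rfl⟩
  exact hr i

theorem dotProduct_mulVec_le_abs_of_nonneg (hA : ∀ i j, 0 ≤ A i j) (y : ι → ℝ) :
    y ⬝ᵥ (A *ᵥ y) ≤ |y| ⬝ᵥ (A *ᵥ |y|) := by
  simp only [dotProduct, mulVec, Finset.mul_sum]
  refine Finset.sum_le_sum fun i _ ↦ Finset.sum_le_sum fun j _ ↦ ?_
  calc y i * (A i j * y j) ≤ |y i * (A i j * y j)| := le_abs_self _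
    _ = |y| i * (A i j * |y| j) := by simp [abs_mul, abs_of_nonneg (hA i j)]

theorem IsHermitian.exists_nonneg_mulVec_eq_iSup_eigenvalues_smul [DecidableEq ι] [Nonempty ι]
    (hA : A.IsHermitian) (hA0 : ∀ i j, 0 ≤ A i j) :
    ∃ x : ι → ℝ, 0 ≤ x ∧ x ≠ 0 ∧ A *ᵥ x = (⨆ i, hA.eigenvalues i) • x := by
  set ρ := ⨆ i, hA.eigenvalues i
  obtain ⟨i₀, hi₀⟩ : ∃ i, hA.eigenvalues i = ρ := exists_eq_ciSup_of_finite
  set y : ι → ℝ := ⇑(hA.eigenvectorBasis i₀)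
  have hy : A *ᵥ y = ρ • y := by
    rw [← hi₀]; exact hA.mulVec_eigenvectorBasis i₀
  have hy0 : y ≠ 0 := by
    simpa [y] using hA.eigenvectorBasis.orthonormal.ne_zero i₀
  have hB := hA.posSemidef_smul_one_sub fun i ↦ le_ciSup (Set.finite_range _).bddAbove i
  have hBmulVec (z : ι → ℝ) : (ρ • 1 - A) *ᵥ z = ρ • z - A *ᵥ z := by
    rw [sub_mulVec, smul_mulVec, one_mulVec]
  have hquad : star |y| ⬝ᵥ ((ρ • 1 - A) *ᵥ |y|) = 0 := by
    refine le_antisymm ?_ (hB.dotProduct_mulVec_nonneg _)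
    have hnorm : |y| ⬝ᵥ |y| = y ⬝ᵥ y := by
      simp only [dotProduct, Pi.abs_apply, abs_mul_abs_self]
    have := dotProduct_mulVec_le_abs_of_nonneg hA0 y
    simp only [star_trivial, hBmulVec, dotProduct_sub, dotProduct_smul, hnorm]
    simp only [hy, dotProduct_smul, smul_eq_mul] at this ⊢
    linarith
  refine ⟨|y|, abs_nonneg y, by simpa using hy0, ?_⟩
  have hker := (hB.dotProduct_mulVec_zero_iff _).mp hquad
  rw [hBmulVec, sub_eq_zero] at hker
  exact hker.symm

end Matrix

namespace SimpleGraph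

variable {V : Type*} [Fintype V] (G : SimpleGraph V) [DecidableRel G.Adj]

theorem sum_degree_mul_eq_of_adjMatrix_mulVec_eq {μ : ℝ} {x : V → ℝ}
    (hx : G.adjMatrix ℝ *ᵥ x = μ • x) : ∑ v, (G.degree v : ℝ) * x v = μ * ∑ v, x v := by
  calc ∑ v, (G.degree v : ℝ) * x v = (1 ᵥ* G.adjMatrix ℝ) ⬝ᵥ x := by simp [dotProduct]
    _ = μ * ∑ v, x v := by
      rw [← dotProduct_mulVec, hx, dotProduct_smul, one_dotProduct, smul_eq_mul]

theorem sub_minDegree_mul_add_one_le_of_adjMatrix_mulVec_eq [DecidableEq V] {μ : ℝ}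
    {x : V → ℝ} (hx0 : 0 ≤ x) (hx : x ≠ 0) (hAx : G.adjMatrix ℝ *ᵥ x = μ • x) :
    (μ - G.minDegree) * (μ + 1) ≤ 2 * #G.edgeFinset - G.minDegree * Fintype.card V := by
  set δ : ℝ := (G.minDegree : ℝ)
  obtain ⟨v, hv⟩ := Function.ne_iff.mp hx
  obtain ⟨u, -, hu⟩ := exists_max_image univ x ⟨v, mem_univ v⟩
  have hxu : 0 < x u := lt_of_lt_of_le (lt_of_le_of_ne (hx0 v) (Ne.symm hv)) (hu v (mem_univ v))
  have hnbr : ∑ w ∈ G.neighborFinset u, x w = μ * x u := by simpa using congrFun hAx u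
  have hu_nbr : x u + ∑ w ∈ G.neighborFinset u, x w ≤ ∑ w, x w := by
    rw [← sum_insert (G.notMem_neighborFinset_self u)]
    exact sum_le_univ_sum_of_nonneg hx0
  have hexcess : ∑ w, ((G.degree w : ℝ) - δ) * x w = (μ - δ) * ∑ w, x w := by
    simp only [sub_mul, sum_sub_distrib, G.sum_degree_mul_eq_of_adjMatrix_mulVec_eq hAx, mul_sum]
  have hdeg (w : V) : 0 ≤ (G.degree w : ℝ) - δ :=
    sub_nonneg.mpr (Nat.cast_le.mpr (G.minDegree_le_degree w))
  have hsum_pos : 0 < ∑ w, x w := hxu.trans_le (single_le_sum (fun w _ ↦ hx0 w) (mem_univ u))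
  have hδμ : δ ≤ μ := by
    refine sub_nonneg.mp (nonneg_of_mul_nonneg_left ?_ hsum_pos)
    rw [← hexcess]
    exact sum_nonneg fun w _ ↦ mul_nonneg (hdeg w) (hx0 w)
  have hhandshake : ∑ w, ((G.degree w : ℝ) - δ) = 2 * #G.edgeFinset - δ * Fintype.card V := by
    rw [sum_sub_distrib, ← Nat.cast_sum, sum_degrees_eq_twice_card_edges]
    simp [mul_comm]
  refine le_of_mul_le_mul_right ?_ hxu
  calc (μ - δ) * (μ + 1) * x u = (μ - δ) * (x u + ∑ w ∈ G.neighborFinset u, x w) := by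
        rw [hnbr]; ring
    _ ≤ (μ - δ) * ∑ w, x w := mul_le_mul_of_nonneg_left hu_nbr (sub_nonneg.mpr hδμ)
    _ = ∑ w, ((G.degree w : ℝ) - δ) * x w := hexcess.symm
    _ ≤ ∑ w, ((G.degree w : ℝ) - δ) * x u :=
        sum_le_sum fun w _ ↦ mul_le_mul_of_nonneg_left (hu w (mem_univ w)) (hdeg w)
    _ = (2 * #G.edgeFinset - δ * Fintype.card V) * x u := by rw [← sum_mul, hhandshake]

end SimpleGraph

theorem specRad_eq_iSup {n : ℕ} (G : SimpleGraph (Fin n)) [DecidableRel G.Adj] :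
    specRad G = ⨆ i, (adjMatrix_isHermitian G).eigenvalues i := by
  unfold specRad
  congr!

theorem specRad_sub_minDegree_mul_add_one_le {n : ℕ} (G : SimpleGraph (Fin n))
    [DecidableRel G.Adj] :
    (specRad G - G.minDegree) * (specRad G + 1) ≤ 2 * #G.edgeFinset - G.minDegree * n := by
  rcases isEmpty_or_nonempty (Fin n) with hV | hV
  · simp [specRad_eq_iSup, minDegree_of_subsingleton]
  · have hA0 (i j : Fin n) : 0 ≤ G.adjMatrix ℝ i j := by
      rw [adjMatrix_apply]; split_ifs <;> norm_num
    obtain ⟨x, hx0, hx, hAx⟩ :=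
      (adjMatrix_isHermitian G).exists_nonneg_mulVec_eq_iSup_eigenvalues_smul hA0
    rw [← specRad_eq_iSup] at hAx
    simpa using G.sub_minDegree_mul_add_one_le_of_adjMatrix_mulVec_eq hx0 hx hAx

/-- Hong–Nikiforov bound: ρ(G) ≤ (δ-1)/2 + √(2e(G) - δn + (δ+1)²/4). -/
theorem spectral_radius_le_of_minDegree {n : ℕ} (G : SimpleGraph (Fin n))
    [DecidableRel G.Adj] :
    specRad G ≤ ((G.minDegree : ℝ) - 1) / 2 +
      Real.sqrt (2 * (G.edgeFinset.card : ℝ) - (G.minDegree : ℝ) * n +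
        ((G.minDegree : ℝ) + 1) ^ 2 / 4) := by
  have hsq : (specRad G - ((G.minDegree : ℝ) - 1) / 2) ^ 2 ≤
      2 * (G.edgeFinset.card : ℝ) - (G.minDegree : ℝ) * n + ((G.minDegree : ℝ) + 1) ^ 2 / 4 := by
    linear_combination specRad_sub_minDegree_mul_add_one_le G
  linarith [le_abs_self (specRad G - ((G.minDegree : ℝ) - 1) / 2), Real.abs_le_sqrt hsq]
end

section
/- Let a be a positive integer and G a graph on n vertices with minimum degree δ(G) ≥ a. If ρ(G) ≥ n - 2, then e(G) ≥ binomial(n-1, 2) + ⌈a/2⌉. -/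
/-!
Take an eigenvector for `ρ = ρ(G)`, replace its entries by their absolute values and scale the
largest one to `1`: this gives `0 ≤ x ≤ 1` with `x u = 1` and `ρ x ≤ A x` entrywise. Reading this
at `u` gives `ρ + 1 ≤ Σ x`; summing it over all vertices gives
`ρ Σ x ≤ Σ deg(v) x_v ≤ 2e - δ (n - Σ x)`. Eliminating `Σ x` yields the Hong–Nikiforov bound in
the form `(ρ - δ)(ρ + 1) + δ n ≤ 2e` (for `δ ≤ ρ`), which for `ρ ≥ n - 2` is at least
`(n - 1)(n - 2) + δ`; as `2e` is even, halving rounds `δ / 2` up. If `ρ < δ`, then `δ = n - 1`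
and `δ n ≤ 2e` already suffices.
-/

open SimpleGraph Finset
open scoped Classical

namespace SimpleGraph

open Matrix

lemma exists_mulVec_eq_specRad_smul {n : ℕ} [NeZero n] (G : SimpleGraph (Fin n))
    [DecidableRel G.Adj] : ∃ z ≠ 0, G.adjMatrix ℝ *ᵥ z = specRad G • z := by
  have hA := adjMatrix_isHermitian G
  obtain ⟨i, hi⟩ : ∃ i, hA.eigenvalues i = ⨆ i, hA.eigenvalues i := exists_eq_ciSup_of_finite
  have hρ : specRad G = hA.eigenvalues i := by
    rw [hi, specRad]
    congr!
  refine ⟨hA.eigenvectorBasis i, ?_, ?_⟩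
  · exact fun h => hA.eigenvectorBasis.orthonormal.ne_zero i (by ext v; simpa using congrFun h v)
  · rw [hρ]
    exact hA.mulVec_eigenvectorBasis i

variable {V : Type*} [Fintype V] (G : SimpleGraph V) [DecidableRel G.Adj]

lemma mul_abs_le_sum_abs_of_mulVec_eq_smul {μ : ℝ} (hμ : 0 ≤ μ) {z : V → ℝ}
    (hz : G.adjMatrix ℝ *ᵥ z = μ • z) (v : V) :
    μ * |z v| ≤ ∑ w ∈ G.neighborFinset v, |z w| := by
  have h := congrFun hz v
  rw [adjMatrix_mulVec_apply, Pi.smul_apply, smul_eq_mul] at h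
  calc μ * |z v| = |∑ w ∈ G.neighborFinset v, z w| := by rw [h, abs_mul, abs_of_nonneg hμ]
    _ ≤ ∑ w ∈ G.neighborFinset v, |z w| := Finset.abs_sum_le_sum_abs _ _

lemma exists_normalized_subeigenvector {μ : ℝ} (hμ : 0 ≤ μ) {z : V → ℝ} (hz0 : z ≠ 0)
    (hz : G.adjMatrix ℝ *ᵥ z = μ • z) :
    ∃ x : V → ℝ, 0 ≤ x ∧ x ≤ 1 ∧ (∃ u, x u = 1) ∧
      ∀ v, μ * x v ≤ ∑ w ∈ G.neighborFinset v, x w := by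
  obtain ⟨v₀, hv₀⟩ := Function.ne_iff.mp hz0
  obtain ⟨u, -, hu⟩ := Finset.exists_max_image univ (fun v => |z v|) ⟨v₀, mem_univ v₀⟩
  have hzu : 0 < |z u| := (abs_pos.mpr hv₀).trans_le (hu v₀ (mem_univ _))
  refine ⟨fun v => |z v| / |z u|, fun v => by positivity,
    fun v => (div_le_one hzu).mpr (hu v (mem_univ v)), ⟨u, div_self hzu.ne'⟩, fun v => ?_⟩
  rw [← Finset.sum_div, mul_div_assoc', div_le_div_iff_of_pos_right hzu]
  exact G.mul_abs_le_sum_abs_of_mulVec_eq_smul hμ hz v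

lemma sum_sum_neighborFinset {R : Type*} [CommSemiring R] (f : V → R) :
    ∑ v, ∑ w ∈ G.neighborFinset v, f w = ∑ v, G.degree v * f v := by
  have h := dotProduct_mulVec (1 : V → R) (G.adjMatrix R) f
  simpa [dotProduct, adjMatrix_mulVec_apply, adjMatrix_vecMul_apply] using h

lemma sum_neighborFinset_add_le_sum {x : V → ℝ} (hx0 : 0 ≤ x) (u : V) :
    ∑ w ∈ G.neighborFinset u, x w + x u ≤ ∑ v, x v := by
  rw [add_comm, ← Finset.sum_insert (G.notMem_neighborFinset_self u)]
  exact Finset.sum_le_sum_of_subset_of_nonneg (subset_univ _) fun v _ _ => hx0 v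

lemma sum_degree_mul_le {x : V → ℝ} (hx1 : x ≤ 1) {d : ℕ} (hd : d ≤ G.minDegree) :
    ∑ v, G.degree v * x v ≤ 2 * #G.edgeFinset - d * (Fintype.card V - ∑ v, x v) := by
  have hdeg (v : V) : (d : ℝ) ≤ G.degree v := mod_cast hd.trans (G.minDegree_le_degree v)
  have h2e : ∑ v, (G.degree v : ℝ) = 2 * #G.edgeFinset :=
    mod_cast G.sum_degrees_eq_twice_card_edges
  calc ∑ v, G.degree v * x v ≤ ∑ v, (G.degree v - d * (1 - x v) : ℝ) :=
        Finset.sum_le_sum fun v _ => by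
          nlinarith [mul_nonneg (sub_nonneg.mpr (hdeg v)) (sub_nonneg.mpr (show x v ≤ 1 from hx1 v))]
    _ = 2 * #G.edgeFinset - d * (Fintype.card V - ∑ v, x v) := by
        rw [Finset.sum_sub_distrib, ← Finset.mul_sum, Finset.sum_sub_distrib, h2e]
        simp

lemma card_mul_le_two_mul_card_edgeFinset {d : ℕ} (hd : d ≤ G.minDegree) :
    Fintype.card V * d ≤ 2 * #G.edgeFinset := by
  rw [← sum_degrees_eq_twice_card_edges, ← smul_eq_mul, ← Finset.card_univ, ← Finset.sum_const]
  exact Finset.sum_le_sum fun v _ => hd.trans (G.minDegree_le_degree v)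

lemma minDegree_le_card_sub_one : G.minDegree ≤ Fintype.card V - 1 := by
  cases isEmpty_or_nonempty V
  · simp [minDegree_of_subsingleton]
  · have := G.minDegree_lt_card; omega

theorem sub_mul_add_one_add_mul_card_le_of_mulVec_eq_smul {μ : ℝ} {z : V → ℝ} (hz0 : z ≠ 0)
    (hz : G.adjMatrix ℝ *ᵥ z = μ • z) {d : ℕ} (hd : d ≤ G.minDegree) (hdμ : d ≤ μ) :
    (μ - d) * (μ + 1) + d * Fintype.card V ≤ 2 * #G.edgeFinset := by
  obtain ⟨x, hx0, hx1, ⟨u, hxu⟩, hx⟩ :=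
    G.exists_normalized_subeigenvector ((Nat.cast_nonneg d).trans hdμ) hz0 hz
  have hsum : μ + 1 ≤ ∑ v, x v := by
    have := G.sum_neighborFinset_add_le_sum hx0 u
    have := hx u
    rw [hxu, mul_one] at *
    linarith
  have hμS : μ * ∑ v, x v ≤ 2 * #G.edgeFinset - d * (Fintype.card V - ∑ v, x v) :=
    calc μ * ∑ v, x v ≤ ∑ v, ∑ w ∈ G.neighborFinset v, x w := by
          rw [Finset.mul_sum]; exact Finset.sum_le_sum fun v _ => hx v
      _ = ∑ v, G.degree v * x v := G.sum_sum_neighborFinset x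
      _ ≤ _ := G.sum_degree_mul_le hx1 hd
  nlinarith [mul_le_mul_of_nonneg_left hsum (sub_nonneg.mpr hdμ)]

end SimpleGraph

lemma Nat.choose_two_add_half_le {k a e : ℕ} (h : k * (k - 1) + a ≤ 2 * e) :
    k.choose 2 + (a + 1) / 2 ≤ e := by
  have := Nat.choose_two_right k
  have := (Nat.even_mul_pred_self k).two_dvd
  omega

theorem edges_ge_of_specRad_general {n a : ℕ}
    (G : SimpleGraph (Fin n)) [DecidableRel G.Adj]
    (hδ : a ≤ G.minDegree) (hρ : (n : ℝ) - 2 ≤ specRad G) :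
    (n - 1).choose 2 + (a + 1) / 2 ≤ G.edgeFinset.card := by
  have ha : a ≤ n - 1 := hδ.trans (by simpa using G.minDegree_le_card_sub_one)
  refine Nat.choose_two_add_half_le ?_
  rcases n with _ | _ | m
  · simp_all
  · simp_all
  obtain ⟨z, hz0, hz⟩ := exists_mulVec_eq_specRad_smul G
  simp only [Nat.add_sub_cancel] at ha ⊢
  have hmρ : (m : ℝ) ≤ specRad G := by push_cast at hρ; linarith
  rcases le_or_gt (a : ℝ) (specRad G) with haρ | hρa
  · have := G.sub_mul_add_one_add_mul_card_le_of_mulVec_eq_smul hz0 hz hδ haρ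
    have ha' : (a : ℝ) ≤ m + 1 := mod_cast ha
    rw [Fintype.card_fin] at this
    push_cast at this
    have hreal : ((m + 1) * m + a : ℝ) ≤ 2 * #G.edgeFinset := by
      nlinarith [mul_nonneg (sub_nonneg.mpr hmρ) (by linarith : (0 : ℝ) ≤ specRad G + m + 1 - a)]
    exact_mod_cast hreal
  · have ham : a = m + 1 := le_antisymm ha (mod_cast hmρ.trans_lt hρa)
    have := G.card_mul_le_two_mul_card_edgeFinset hδ
    rw [Fintype.card_fin] at this
    subst ham
    nlinarith

/-- If δ(G) ≥ a ≥ 1 and ρ(G) ≥ n - 2, then e(G) ≥ C(n-1,2) + ⌈a/2⌉. -/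
theorem edges_ge_of_specRad {n a : ℕ} (ha : 1 ≤ a)
    (G : SimpleGraph (Fin n)) [DecidableRel G.Adj]
    (hδ : a ≤ G.minDegree) (hρ : (n : ℝ) - 2 ≤ specRad G) :
    (n - 1).choose 2 + (a + 1) / 2 ≤ G.edgeFinset.card :=
  edges_ge_of_specRad_general G hδ hρ
end

section
/- For n even, n ≥ 4, if G is an n-vertex graph that is not matching covered, then e(G) ≤ binomial(n-1, 2) + 2, with equality if and only if G is isomorphic to H_{n,3} = K_2 ∨ (K_1 ∪ K_{n-3}) or to K_3 ∨ 3K_1 (the latter only when n = 6). -/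
open SimpleGraph Finset
open scoped Classical

/-- H_{n,γ}: vertex 0 is joined to the γ-1 vertices 1,…,γ-1; vertices 1,…,n-1 form a
clique.  Thus Hgraph n γ = K_{γ-1} ∨ (K_{n-γ} ∪ K_1). -/
def Hgraph (n γ : ℕ) : SimpleGraph (Fin n) :=
  SimpleGraph.fromRel (fun u v =>
    (0 < u.val ∧ 0 < v.val) ∨ (u.val = 0 ∧ 0 < v.val ∧ v.val < γ))

/-- K_3 ∨ (m-3)K_1 : the first three vertices are mutually adjacent and adjacent to
everything; the remaining vertices are independent. -/
def K3join (m : ℕ) : SimpleGraph (Fin m) :=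
  SimpleGraph.fromRel (fun u _ => u.val < 3)

/-- The number of edges of a finite graph. -/
noncomputable def edgeCount {V : Type*} [Fintype V] (G : SimpleGraph V) : ℕ :=
  Nat.card G.edgeSet

/-- G is matching covered: every edge lies in some perfect matching. -/
def IsMatchingCovered {V : Type*} (G : SimpleGraph V) : Prop :=
  ∀ e ∈ G.edgeSet, ∃ M : G.Subgraph, M.IsPerfectMatching ∧ e ∈ M.edgeSet

/-!
If the edge `uv` lies in no perfect matching, then `G - u - v` has none. A graph on an even
number `m` of vertices whose complement has at most `m - 2` edges does have a perfect matching: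
some edge `ab` of `G` has ends meeting at least `min 2 e(Gᶜ)` non-edges, and `G - a - b` satisfies
the same bound. Hence `Gᶜ` has at least `n - 3` edges, and when equality holds none of them
meets `u` or `v`. If `G - u - v` on `m` vertices has exactly `m - 1` non-edges and no perfect
matching, the same deletion argument shows that the ends of every edge meet at most two
non-edges. That leaves only `K_{m-1} + K_1` and, for `m = 4`, the claw `K_{1,3}`. Adding back
the universal vertices `u`, `v` gives `H_{n,3}` and `K_3 ∨ 3K_1`.
-/

theorem Finset.sum_le_sum_add_card_compl_mul {α : Type*} [Fintype α] [DecidableEq α]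
    {f : α → ℕ} {c : ℕ} (hf : ∀ a, f a ≤ c) (s : Finset α) :
    ∑ a, f a ≤ ∑ a ∈ s, f a + (Fintype.card α - #s) * c := by
  rw [← sum_add_sum_compl s, ← card_compl, ← smul_eq_mul]
  gcongr
  exact sum_le_card_nsmul _ _ _ fun a _ ↦ hf a

theorem Set.card_compl_pair {α : Type*} [Fintype α] [DecidableEq α] {a b : α} (hab : a ≠ b) :
    Fintype.card ({a, b}ᶜ : Set α) = Fintype.card α - 2 := by
  rw [Fintype.card_compl_set, Set.card_insert _ (by simpa using hab), Set.card_singleton]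

theorem Nat.choose_two_eq_choose_two_pred_add (n : ℕ) :
    n.choose 2 = (n - 1).choose 2 + (n - 1) := by
  cases n <;> simp [Nat.choose_succ_succ', add_comm]

theorem Equiv.Perm.exists_apply_eq_of_three {α : Type*} [DecidableEq α] {a b c a' b' c' : α}
    (hab : a ≠ b) (hac : a ≠ c) (hbc : b ≠ c) (hab' : a' ≠ b') (hac' : a' ≠ c')
    (hbc' : b' ≠ c') : ∃ σ : Equiv.Perm α, σ a = a' ∧ σ b = b' ∧ σ c = c' := by
  set σ₁ := Equiv.swap a a'
  have h₁a : σ₁ a = a' := Equiv.swap_apply_left a a'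
  have h₁b : σ₁ b ≠ a' := h₁a ▸ σ₁.injective.ne hab.symm
  have h₁c : σ₁ c ≠ a' := h₁a ▸ σ₁.injective.ne hac.symm
  set σ₂ := Equiv.swap (σ₁ b) b'
  have h₂a : σ₂ a' = a' := Equiv.swap_apply_of_ne_of_ne h₁b.symm hab'
  have h₂b : σ₂ (σ₁ b) = b' := Equiv.swap_apply_left _ _
  have h₂ca : σ₂ (σ₁ c) ≠ a' := h₂a ▸ σ₂.injective.ne h₁c
  have h₂cb : σ₂ (σ₁ c) ≠ b' := h₂b ▸ σ₂.injective.ne (σ₁.injective.ne hbc).symm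
  refine ⟨(σ₁.trans σ₂).trans (Equiv.swap (σ₂ (σ₁ c)) c'), ?_, ?_, Equiv.swap_apply_left _ _⟩
  · simp only [Equiv.trans_apply, h₁a, h₂a]
    exact Equiv.swap_apply_of_ne_of_ne h₂ca.symm hac'
  · simp only [Equiv.trans_apply, h₂b]
    exact Equiv.swap_apply_of_ne_of_ne h₂cb.symm hbc'

theorem Fin.exists_equiv_val_eq_iff {n : ℕ} (hn : 3 ≤ n) {a b c : Fin n}
    (hab : a ≠ b) (hac : a ≠ c) (hbc : b ≠ c) :
    ∃ σ : Fin n ≃ Fin n, ∀ x,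
      ((σ x : ℕ) = 0 ↔ x = a) ∧ ((σ x : ℕ) = 1 ↔ x = b) ∧ ((σ x : ℕ) = 2 ↔ x = c) := by
  obtain ⟨σ, ha, hb, hc⟩ := Equiv.Perm.exists_apply_eq_of_three (a' := ⟨0, by omega⟩)
    (b' := ⟨1, by omega⟩) (c' := ⟨2, by omega⟩) hab hac hbc (by simp [Fin.ext_iff])
    (by simp [Fin.ext_iff]) (by simp [Fin.ext_iff])
  have key (x y : Fin n) (i : ℕ) (hi : (σ y : ℕ) = i) : (σ x : ℕ) = i ↔ x = y := by
    rw [← hi, Fin.val_inj, σ.apply_eq_iff_eq]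
  exact ⟨σ, fun x ↦ ⟨key x a 0 (by rw [ha]), key x b 1 (by rw [hb]), key x c 2 (by rw [hc])⟩⟩

namespace SimpleGraph

variable {V : Type*}

/-- A perfect matching, recorded as the map sending each vertex to its partner. -/
def IsMatchingInvolution (G : SimpleGraph V) (f : V → V) : Prop :=
  Function.Involutive f ∧ ∀ v, G.Adj v (f v)

namespace IsMatchingInvolution

variable {G : SimpleGraph V} {f : V → V}

theorem exists_isPerfectMatching_mem_edgeSet (hf : G.IsMatchingInvolution f) (v : V) :
    ∃ M : G.Subgraph, M.IsPerfectMatching ∧ s(v, f v) ∈ M.edgeSet := by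
  let M : G.Subgraph :=
    { verts := Set.univ
      Adj x y := G.Adj x y ∧ f x = y
      adj_sub h := h.1
      edge_vert _ := Set.mem_univ _
      symm := ⟨fun x y h ↦ ⟨h.1.symm, h.2 ▸ hf.1 x⟩⟩ }
  exact ⟨M, ⟨fun x _ ↦ ⟨f x, ⟨hf.2 x, rfl⟩, fun _ hy ↦ hy.2.symm⟩, fun _ ↦ Set.mem_univ _⟩,
    hf.2 v, rfl⟩

theorem extend {a b : V} (hab : G.Adj a b) {g : ({a, b}ᶜ : Set V) → ({a, b}ᶜ : Set V)}
    (hg : (G.induce {a, b}ᶜ).IsMatchingInvolution g) :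
    ∃ f, G.IsMatchingInvolution f ∧ f a = b := by
  have hout {x : V} (hx : x ∉ ({a, b}ᶜ : Set V)) : x = a ∨ x = b := by
    simpa [or_iff_not_imp_left] using hx
  let f x := if h : x ∈ ({a, b}ᶜ : Set V) then (g ⟨x, h⟩ : V) else Equiv.swap a b x
  have hf_in {x : V} (h : x ∈ ({a, b}ᶜ : Set V)) : f x = g ⟨x, h⟩ := dif_pos h
  have hfa : f a = b := by simp [f]
  have hfb : f b = a := by simp [f]
  refine ⟨f, ⟨fun x ↦ ?_, fun x ↦ ?_⟩, hfa⟩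
  · by_cases hx : x ∈ ({a, b}ᶜ : Set V)
    · rw [hf_in hx, hf_in (g ⟨x, hx⟩).2, hg.1]
    · rcases hout hx with rfl | rfl
      · rw [hfa, hfb]
      · rw [hfb, hfa]
  · by_cases hx : x ∈ ({a, b}ᶜ : Set V)
    · rw [hf_in hx]
      exact hg.2 ⟨x, hx⟩
    · rcases hout hx with rfl | rfl
      · rwa [hfa]
      · rw [hfb]
        exact hab.symm

end IsMatchingInvolution

theorem exists_adj_of_not_isMatchingCovered {G : SimpleGraph V} (h : ¬ IsMatchingCovered G) :
    ∃ u v, G.Adj u v ∧ ¬ ∃ g, (G.induce {u, v}ᶜ).IsMatchingInvolution g := by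
  simp only [IsMatchingCovered, not_forall, exists_prop] at h
  obtain ⟨e, he, hM⟩ := h
  induction e using Sym2.ind with
  | _ u v =>
    rw [mem_edgeSet] at he
    refine ⟨u, v, he, fun ⟨g, hg⟩ ↦ ?_⟩
    obtain ⟨f, hf, hfu⟩ := IsMatchingInvolution.extend he hg
    obtain ⟨M, hM', huv⟩ := hf.exists_isPerfectMatching_mem_edgeSet u
    exact hM ⟨M, hM', hfu ▸ huv⟩

theorem adj_iff_of_induce_compl_pair {G : SimpleGraph V} {u v : V}
    (hu : ∀ x, x ≠ u → G.Adj u x) (hv : ∀ x, x ≠ v → G.Adj v x) {P : V → V → Prop}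
    (hP : ∀ x y : ({u, v}ᶜ : Set V), (G.induce {u, v}ᶜ).Adj x y ↔ (x : V) ≠ y ∧ P x y)
    (x y : V) : G.Adj x y ↔ x ≠ y ∧ (x = u ∨ x = v ∨ y = u ∨ y = v ∨ P x y) := by
  by_cases hxy : x = u ∨ x = v ∨ y = u ∨ y = v
  · have hadj : x ≠ y → G.Adj x y := by
      rcases hxy with rfl | rfl | rfl | rfl
      exacts [fun h ↦ hu y h.symm, fun h ↦ hv y h.symm, fun h ↦ (hu x h).symm,
        fun h ↦ (hv x h).symm]
    exact ⟨fun h ↦ ⟨h.ne, by tauto⟩, fun h ↦ hadj h.1⟩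
  · push Not at hxy
    obtain ⟨hxu, hxv, hyu, hyv⟩ := hxy
    simpa [hxu, hxv, hyu, hyv] using hP ⟨x, by simp [hxu, hxv]⟩ ⟨y, by simp [hyu, hyv]⟩

theorem compl_induce (G : SimpleGraph V) (s : Set V) : (G.induce s)ᶜ = Gᶜ.induce s := by
  ext x y
  simp [Subtype.ext_iff]

variable [Fintype V]

theorem edgeCount_eq_card_edgeFinset (G : SimpleGraph V) [DecidableRel G.Adj] :
    edgeCount G = #G.edgeFinset := by
  rw [edgeCount, Nat.card_eq_fintype_card, edgeFinset_card]

theorem edgeCount_congr {W : Type*} [Fintype W] {G : SimpleGraph V} {H : SimpleGraph W}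
    (e : G ≃g H) : edgeCount G = edgeCount H :=
  Nat.card_congr e.mapEdgeSet

variable [DecidableEq V]

theorem card_edgeFinset_add_card_edgeFinset_compl (G : SimpleGraph V) [DecidableRel G.Adj] :
    #G.edgeFinset + #Gᶜ.edgeFinset = (Fintype.card V).choose 2 := by
  rw [← card_edgeFinset_top_eq_card_choose_two,
    ← card_union_of_disjoint (disjoint_edgeFinset.2 disjoint_compl_right), ← edgeFinset_sup]
  congr! 2
  exact sup_compl_eq_top

theorem degree_eq_card_edgeFinset_iff {K : SimpleGraph V} [DecidableRel K.Adj] {w : V} :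
    K.degree w = #K.edgeFinset ↔ ∀ x y, K.Adj x y → w = x ∨ w = y := by
  rw [← card_incidenceFinset_eq_degree]
  constructor
  · intro h x y hxy
    have hinc := eq_of_subset_of_card_le (K.incidenceFinset_subset w) h.ge
    have hmem : s(x, y) ∈ K.incidenceFinset w := hinc ▸ K.mem_edgeFinset.2 hxy
    exact Sym2.mem_iff.1 ((K.mem_incidenceFinset _ _).1 hmem).2
  · intro h
    congr 1
    refine (K.incidenceFinset_subset w).antisymm fun e he ↦ ?_
    induction e with
    | h x y =>
      have hxy := K.mem_edgeFinset.1 he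
      exact (K.mem_incidenceFinset _ _).2 ⟨hxy, Sym2.mem_iff.2 (h x y hxy)⟩

variable {G : SimpleGraph V} [DecidableRel G.Adj]

theorem card_edgeFinset_compl_induce_compl_pair {a b : V} (hab : G.Adj a b) :
    #((G.induce {a, b}ᶜ)ᶜ).edgeFinset + Gᶜ.degree a + Gᶜ.degree b = #Gᶜ.edgeFinset := by
  set T := ({a, b}ᶜ : Set V).toFinset.sym2
  have hind : #((G.induce {a, b}ᶜ)ᶜ).edgeFinset = #(Gᶜ.edgeFinset ∩ T) := by
    rw [← map_edgeFinset_induce, card_map]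
    congr! 2
    exact compl_induce G _
  have hT (x y : V) : s(x, y) ∈ Gᶜ.edgeFinset ∩ T ↔
      (x ≠ y ∧ ¬G.Adj x y) ∧ (x ≠ a ∧ x ≠ b) ∧ y ≠ a ∧ y ≠ b := by
    simp [T]
  have hinc (c x y : V) :
      s(x, y) ∈ Gᶜ.incidenceFinset c ↔ (x ≠ y ∧ ¬G.Adj x y) ∧ (c = x ∨ c = y) := by
    simp [incidenceSet]
  have hsplit : Gᶜ.edgeFinset =
      (Gᶜ.edgeFinset ∩ T) ∪ (Gᶜ.incidenceFinset a ∪ Gᶜ.incidenceFinset b) := by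
    ext e
    induction e with
    | h x y =>
      rw [mem_union, mem_union, hT, hinc, hinc, mem_edgeFinset, mem_edgeSet, compl_adj]
      grind [G.adj_symm]
  have hab_disj : Disjoint (Gᶜ.incidenceFinset a) (Gᶜ.incidenceFinset b) := by
    rw [Finset.disjoint_left]
    intro e
    induction e with
    | h x y =>
      rw [hinc, hinc]
      grind [G.adj_symm, hab.ne]
  have hT_disj : Disjoint (Gᶜ.edgeFinset ∩ T) (Gᶜ.incidenceFinset a ∪ Gᶜ.incidenceFinset b) := by
    rw [Finset.disjoint_left]
    intro e
    induction e with
    | h x y =>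
      rw [mem_union, hT, hinc, hinc]
      grind
  rw [hind, ← card_incidenceFinset_eq_degree, ← card_incidenceFinset_eq_degree, add_assoc,
    ← card_union_of_disjoint hab_disj, ← card_union_of_disjoint hT_disj, ← hsplit]

theorem exists_adj_of_compl_degree_lt {a : V} (h : Gᶜ.degree a < Fintype.card V - 1) :
    ∃ b, G.Adj a b := by
  rw [degree_compl] at h
  exact (G.degree_pos_iff_exists_adj a).1 (by omega)

theorem adj_of_compl_degree_eq_zero {a x : V} (h : Gᶜ.degree a = 0) (hx : x ≠ a) : G.Adj a x := by
  by_contra hG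
  have := (Gᶜ.degree_pos_iff_exists_adj a).2 ⟨x, (G.compl_adj a x).2 ⟨hx.symm, hG⟩⟩
  omega

theorem exists_adj_compl_degree_eq_one (hle : ∀ v, Gᶜ.degree v ≤ 1)
    (h2 : 2 ≤ #Gᶜ.edgeFinset) : ∃ a b, G.Adj a b ∧ Gᶜ.degree a = 1 ∧ Gᶜ.degree b = 1 := by
  set D := univ.filter fun v ↦ Gᶜ.degree v = 1
  have hD : 2 * #Gᶜ.edgeFinset ≤ #D := by
    rw [← sum_degrees_eq_twice_card_edges, card_filter]
    exact sum_le_sum fun v _ ↦ by have := hle v; split_ifs <;> omega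
  obtain ⟨a, ha⟩ : D.Nonempty := card_pos.1 (by omega)
  obtain ⟨x, -, hx⟩ := degree_eq_one_iff_existsUnique_adj.1 (mem_filter.1 ha).2
  obtain ⟨b, hb, hbax⟩ := exists_mem_notMem_of_card_lt_card (s := {a, x}) (t := D)
    (by have := card_le_two (a := a) (b := x); omega)
  simp only [mem_insert, mem_singleton, not_or] at hbax
  refine ⟨a, b, ?_, (mem_filter.1 ha).2, (mem_filter.1 hb).2⟩
  by_contra hG
  exact hbax.2 (hx b ((G.compl_adj a b).2 ⟨Ne.symm hbax.1, hG⟩))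

theorem exists_adj_min_two_le_compl_degree_add (hV : 2 ≤ Fintype.card V)
    (hc : #Gᶜ.edgeFinset ≤ Fintype.card V - 2) :
    ∃ a b, G.Adj a b ∧ min 2 #Gᶜ.edgeFinset ≤ Gᶜ.degree a + Gᶜ.degree b := by
  by_cases h : ∃ a, min 2 #Gᶜ.edgeFinset ≤ Gᶜ.degree a
  · obtain ⟨a, ha⟩ := h
    have := Gᶜ.degree_le_card_edgeFinset a
    obtain ⟨b, hab⟩ := exists_adj_of_compl_degree_lt (G := G) (a := a) (by omega)
    exact ⟨a, b, hab, by omega⟩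
  push Not at h
  have hv : Nonempty V := Fintype.card_pos_iff.1 (by omega)
  have h2 : 2 ≤ #Gᶜ.edgeFinset := by
    by_contra! h2
    have hzero : ∑ v, Gᶜ.degree v = 0 := sum_eq_zero fun v _ ↦ by have := h v; omega
    rw [sum_degrees_eq_twice_card_edges] at hzero
    have := h hv.some
    omega
  obtain ⟨a, b, hab, ha, hb⟩ := exists_adj_compl_degree_eq_one (fun v ↦ by have := h v; omega) h2
  exact ⟨a, b, hab, by omega⟩

theorem exists_isMatchingInvolution_of_card_compl_le (hV : Even (Fintype.card V))
    (hc : #Gᶜ.edgeFinset ≤ Fintype.card V - 2) :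
    ∃ f, G.IsMatchingInvolution f := by
  induction hm : Fintype.card V using Nat.strong_induction_on generalizing V G with
  | _ m ih =>
  rcases Nat.eq_zero_or_pos m with rfl | hpos
  · have : IsEmpty V := Fintype.card_eq_zero_iff.1 hm
    exact ⟨id, fun _ ↦ rfl, isEmptyElim⟩
  have hm2 : 2 ≤ Fintype.card V := by
    rcases hV with ⟨k, hk⟩
    omega
  obtain ⟨a, b, hab, hdeg⟩ := exists_adj_min_two_le_compl_degree_add (G := G) hm2 (by omega)
  have hcard := Set.card_compl_pair hab.ne
  have hcount := card_edgeFinset_compl_induce_compl_pair hab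
  have hsmall : #((G.induce {a, b}ᶜ)ᶜ).edgeFinset ≤ Fintype.card ({a, b}ᶜ : Set V) - 2 := by
    omega
  obtain ⟨g, hg⟩ := ih (m - 2) (by omega) (by rw [hcard]; exact hV.tsub even_two) hsmall
    (by rw [hcard, hm])
  obtain ⟨f, hf, -⟩ := IsMatchingInvolution.extend hab hg
  exact ⟨f, hf⟩

theorem compl_degree_add_le_two_of_adj (hV : Even (Fintype.card V))
    (hc : #Gᶜ.edgeFinset ≤ Fintype.card V - 1) (hno : ¬ ∃ f, G.IsMatchingInvolution f)
    {a b : V} (hab : G.Adj a b) : Gᶜ.degree a + Gᶜ.degree b ≤ 2 := by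
  by_contra! h
  have hcount := card_edgeFinset_compl_induce_compl_pair hab
  have hsmall : #((G.induce {a, b}ᶜ)ᶜ).edgeFinset ≤ Fintype.card ({a, b}ᶜ : Set V) - 2 := by
    rw [Set.card_compl_pair hab.ne]
    omega
  obtain ⟨g, hg⟩ := exists_isMatchingInvolution_of_card_compl_le
    (by rw [Set.card_compl_pair hab.ne]; exact hV.tsub even_two) hsmall
  obtain ⟨f, hf, -⟩ := IsMatchingInvolution.extend hab hg
  exact hno ⟨f, hf⟩

theorem exists_compl_degree_eq_two (hV : 2 ≤ Fintype.card V)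
    (hc : #Gᶜ.edgeFinset = Fintype.card V - 1) (hle : ∀ v, Gᶜ.degree v ≤ 2)
    (hadj : ∀ v, ∃ w, G.Adj v w) : ∃ t, Gᶜ.degree t = 2 := by
  by_contra! h
  have hle' (v : V) : Gᶜ.degree v ≤ 1 ∧ Gᶜ.degree v ≤ Fintype.card V - 2 := by
    obtain ⟨w, hw⟩ := hadj v
    have := (G.degree_pos_iff_exists_adj v).2 ⟨w, hw⟩
    have := G.degree_compl v
    have := hle v
    have := h v
    omega
  have hsum := sum_degrees_eq_twice_card_edges Gᶜ
  have h1 := sum_le_card_nsmul univ (fun v ↦ Gᶜ.degree v) 1 fun v _ ↦ (hle' v).1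
  have h2 := sum_le_card_nsmul univ (fun v ↦ Gᶜ.degree v) (Fintype.card V - 2)
    fun v _ ↦ (hle' v).2
  simp only [card_univ, smul_eq_mul] at h1 h2
  have hm : Fintype.card V = 2 := by omega
  rw [hm] at h2 hc
  omega

theorem card_eq_four_of_compl_degree_add_le_two (hV : 2 ≤ Fintype.card V)
    (hc : #Gᶜ.edgeFinset = Fintype.card V - 1)
    (hdeg : ∀ a b, G.Adj a b → Gᶜ.degree a + Gᶜ.degree b ≤ 2) (hadj : ∀ v, ∃ w, G.Adj v w) :
    Fintype.card V = 4 ∧ ∃ z, ∀ x y, G.Adj x y ↔ x ≠ y ∧ (x = z ∨ y = z) := by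
  have hle (v : V) : Gᶜ.degree v ≤ 2 := by
    obtain ⟨w, hw⟩ := hadj v
    have := hdeg v w hw
    omega
  have hsum : ∑ v, Gᶜ.degree v = 2 * (Fintype.card V - 1) := by
    rw [sum_degrees_eq_twice_card_edges, hc]
  have hbound := sum_le_sum_add_card_compl_mul hle
  obtain ⟨t, ht⟩ := exists_compl_degree_eq_two hV hc hle hadj
  have hzero {y : V} (hy : G.Adj t y) : Gᶜ.degree y = 0 := by
    have := hdeg t y hy
    omega
  obtain ⟨z, htz⟩ := hadj t
  have hz := hzero htz
  -- the `m - 3` neighbours of `t` have no non-edges, so three vertices carry the sum `2m - 2`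
  have hcard : Fintype.card V = 4 := by
    have := G.degree_compl t
    have := G.degree_lt_card_verts t
    have := (G.degree_pos_iff_exists_adj t).2 ⟨z, htz⟩
    have hZ : G.degree t ≤ #{v | Gᶜ.degree v = 0} := by
      rw [← card_neighborFinset_eq_degree]
      exact card_le_card fun y hy ↦
        mem_filter.2 ⟨mem_univ y, hzero ((G.mem_neighborFinset t y).1 hy)⟩
    have := hbound {v | Gᶜ.degree v = 0}
    rw [sum_eq_zero fun v hv ↦ (mem_filter.1 hv).2] at this
    omega
  refine ⟨hcard, z, fun x y ↦ ⟨fun hxy ↦ ⟨hxy.ne, ?_⟩, ?_⟩⟩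
  · by_contra! hne
    have hxyz : ∑ v ∈ {x, y, z}, Gᶜ.degree v = Gᶜ.degree x + Gᶜ.degree y + Gᶜ.degree z := by
      rw [sum_insert (by simp [hxy.ne, hne.1]), sum_pair hne.2, add_assoc]
    have hcard3 : #({x, y, z} : Finset V) = 3 := by
      rw [card_insert_of_notMem (by simp [hxy.ne, hne.1]), card_pair hne.2]
    have := hbound {x, y, z}
    have := hdeg x y hxy
    omega
  · rintro ⟨hne, rfl | rfl⟩
    · exact adj_of_compl_degree_eq_zero hz hne.symm
    · exact (adj_of_compl_degree_eq_zero hz hne).symm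

theorem isolated_or_claw_of_card_compl_eq (hV : Even (Fintype.card V))
    (hc : #Gᶜ.edgeFinset = Fintype.card V - 1) (hno : ¬ ∃ f, G.IsMatchingInvolution f) :
    (∃ w, ∀ x y, G.Adj x y ↔ x ≠ y ∧ x ≠ w ∧ y ≠ w) ∨
      (Fintype.card V = 4 ∧ ∃ z, ∀ x y, G.Adj x y ↔ x ≠ y ∧ (x = z ∨ y = z)) := by
  have hV2 : 2 ≤ Fintype.card V := by
    by_contra! h
    exact hno (exists_isMatchingInvolution_of_card_compl_le hV (by omega))
  have hdeg (a b : V) := compl_degree_add_le_two_of_adj hV hc.le hno (a := a) (b := b)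
  by_cases hw : ∃ w, G.degree w = 0
  · obtain ⟨w, hw⟩ := hw
    have hstar : Gᶜ.degree w = #Gᶜ.edgeFinset := by rw [degree_compl, hw, hc, Nat.sub_zero]
    refine .inl ⟨w, fun x y ↦ ⟨fun hxy ↦ ⟨hxy.ne, ?_, ?_⟩, fun ⟨hxy, hxw, hyw⟩ ↦ ?_⟩⟩
    · rintro rfl
      exact (G.degree_eq_zero x).1 hw y hxy
    · rintro rfl
      exact (G.degree_eq_zero y).1 hw x hxy.symm
    · by_contra hG
      rcases degree_eq_card_edgeFinset_iff.1 hstar x y ((G.compl_adj x y).2 ⟨hxy, hG⟩) with h | h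
      exacts [hxw h.symm, hyw h.symm]
  · push Not at hw
    exact .inr (card_eq_four_of_compl_degree_add_le_two hV2 hc hdeg
      fun v ↦ (G.degree_pos_iff_exists_adj v).1 (Nat.pos_of_ne_zero (hw v)))

end SimpleGraph

theorem nonempty_iso_hgraph {n : ℕ} (hn : 3 ≤ n) {G : SimpleGraph (Fin n)} {w u v : Fin n}
    (hwu : w ≠ u) (hwv : w ≠ v) (huv : u ≠ v)
    (hG : ∀ x y, G.Adj x y ↔ x ≠ y ∧ (x = u ∨ x = v ∨ y = u ∨ y = v ∨ (x ≠ w ∧ y ≠ w))) :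
    Nonempty (G ≃g Hgraph n 3) := by
  obtain ⟨σ, hσ⟩ := Fin.exists_equiv_val_eq_iff hn hwu hwv huv
  refine ⟨⟨σ, fun {x y} ↦ ?_⟩⟩
  rw [hG, ne_eq, ← σ.apply_eq_iff_eq (x := x) (y := y)]
  simp only [ne_eq, ← (hσ x).1, ← (hσ x).2.1, ← (hσ x).2.2, ← (hσ y).1, ← (hσ y).2.1,
    ← (hσ y).2.2]
  simp only [Hgraph, fromRel_adj, ne_eq, Fin.ext_iff]
  omega

theorem nonempty_iso_k3join {n : ℕ} (hn : 3 ≤ n) {G : SimpleGraph (Fin n)} {u v z : Fin n}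
    (huv : u ≠ v) (huz : u ≠ z) (hvz : v ≠ z)
    (hG : ∀ x y, G.Adj x y ↔ x ≠ y ∧ (x = u ∨ x = v ∨ y = u ∨ y = v ∨ (x = z ∨ y = z))) :
    Nonempty (G ≃g K3join n) := by
  obtain ⟨σ, hσ⟩ := Fin.exists_equiv_val_eq_iff hn huv huz hvz
  refine ⟨⟨σ, fun {x y} ↦ ?_⟩⟩
  rw [hG, ne_eq, ← σ.apply_eq_iff_eq (x := x) (y := y)]
  simp only [← (hσ x).1, ← (hσ x).2.1, ← (hσ x).2.2, ← (hσ y).1, ← (hσ y).2.1, ← (hσ y).2.2]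
  simp only [K3join, fromRel_adj, ne_eq, Fin.ext_iff]
  omega

theorem nonempty_iso_hgraph_or_k3join {n : ℕ} (hn : 3 ≤ n) (he : Even n)
    {G : SimpleGraph (Fin n)} {u v : Fin n} (huv : G.Adj u v)
    (hno : ¬ ∃ g, (G.induce {u, v}ᶜ).IsMatchingInvolution g)
    (hcu : Gᶜ.degree u = 0) (hcv : Gᶜ.degree v = 0)
    (hc : #((G.induce {u, v}ᶜ)ᶜ).edgeFinset = n - 3) :
    Nonempty (G ≃g Hgraph n 3) ∨ (n = 6 ∧ Nonempty (G ≃g K3join n)) := by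
  have hS : Fintype.card ({u, v}ᶜ : Set (Fin n)) = n - 2 := by
    rw [Set.card_compl_pair huv.ne, Fintype.card_fin]
  have hu (x) (hx : x ≠ u) : G.Adj u x := adj_of_compl_degree_eq_zero hcu hx
  have hv (x) (hx : x ≠ v) : G.Adj v x := adj_of_compl_degree_eq_zero hcv hx
  rcases isolated_or_claw_of_card_compl_eq (hS ▸ he.tsub even_two) (by omega) hno with
    ⟨w, hw⟩ | ⟨h4, z, hz⟩
  · have hwS := w.2
    simp only [Set.mem_compl_iff, Set.mem_insert_iff, Set.mem_singleton_iff, not_or] at hwS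
    refine .inl (nonempty_iso_hgraph hn hwS.1 hwS.2 huv.ne
      (adj_iff_of_induce_compl_pair hu hv (P := fun x y ↦ x ≠ w ∧ y ≠ w) fun x y ↦ ?_))
    rw [hw]
    simp [Subtype.ext_iff]
  · have hzS := z.2
    simp only [Set.mem_compl_iff, Set.mem_insert_iff, Set.mem_singleton_iff, not_or] at hzS
    refine .inr ⟨by omega, nonempty_iso_k3join hn huv.ne (Ne.symm hzS.1) (Ne.symm hzS.2)
      (adj_iff_of_induce_compl_pair hu hv (P := fun x y ↦ x = z ∨ y = z) fun x y ↦ ?_)⟩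
    rw [hz]
    simp [Subtype.ext_iff]

theorem card_edgeFinset_compl_hgraph {n : ℕ} (hn : 3 ≤ n) :
    #(Hgraph n 3)ᶜ.edgeFinset = n - 3 := by
  have h0 : 0 < n := by omega
  rw [← (degree_eq_card_edgeFinset_iff (w := ⟨0, h0⟩)).2, ← card_neighborFinset_eq_degree]
  · have : (Hgraph n 3)ᶜ.neighborFinset ⟨0, h0⟩ = univ.filter fun y : Fin n ↦ ¬ (y : ℕ) < 3 := by
      ext y
      rw [mem_neighborFinset]
      simp only [compl_adj, Hgraph, fromRel_adj, mem_filter, mem_univ, true_and, ne_eq,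
        Fin.ext_iff]
      omega
    rw [this, filter_not, card_sdiff_of_subset (filter_subset _ _), Fin.card_filter_val_lt,
      card_univ, Fintype.card_fin]
    omega
  · intro x y h
    simp only [Hgraph, compl_adj, ne_eq, Fin.ext_iff, fromRel_adj, not_and, not_or, not_lt,
      nonpos_iff_eq_zero] at h ⊢
    omega

theorem edgeCount_hgraph {n : ℕ} (hn : 3 ≤ n) :
    edgeCount (Hgraph n 3) = (n - 1).choose 2 + 2 := by
  have := card_edgeFinset_add_card_edgeFinset_compl (Hgraph n 3)
  rw [card_edgeFinset_compl_hgraph hn, Fintype.card_fin,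
    Nat.choose_two_eq_choose_two_pred_add] at this
  rw [edgeCount_eq_card_edgeFinset]
  omega

theorem edgeCount_k3join_six : edgeCount (K3join 6) = 12 := by
  -- a computable adjacency instance instead of the classical one, so that `decide` can count
  let : DecidableRel (K3join 6).Adj := fun u v ↦ by unfold K3join; infer_instance
  rw [edgeCount, Nat.card_eq_fintype_card]
  decide

/-- For even n ≥ 4, every n-vertex graph that is not matching covered has at most
C(n-1,2) + 2 edges, with equality iff G ≅ H_{n,3} or (n = 6 and) G ≅ K_3 ∨ 3K_1. -/
theorem size_extremal_non_matchingCovered {n : ℕ} (hn : 4 ≤ n) (he : Even n)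
    (G : SimpleGraph (Fin n)) (h : ¬ IsMatchingCovered G) :
    edgeCount G ≤ (n - 1).choose 2 + 2 ∧
      (edgeCount G = (n - 1).choose 2 + 2 ↔
        Nonempty (G ≃g Hgraph n 3) ∨ (n = 6 ∧ Nonempty (G ≃g K3join n))) := by
  obtain ⟨u, v, huv, hno⟩ := exists_adj_of_not_isMatchingCovered h
  have hS : Fintype.card ({u, v}ᶜ : Set (Fin n)) = n - 2 := by
    rw [Set.card_compl_pair huv.ne, Fintype.card_fin]
  have hlow : n - 3 ≤ #((G.induce {u, v}ᶜ)ᶜ).edgeFinset := by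
    by_contra! hlt
    exact hno (exists_isMatchingInvolution_of_card_compl_le (hS ▸ he.tsub even_two)
      (by omega))
  have hcount := card_edgeFinset_compl_induce_compl_pair huv
  have htotal := card_edgeFinset_add_card_edgeFinset_compl G
  rw [Fintype.card_fin, Nat.choose_two_eq_choose_two_pred_add] at htotal
  rw [edgeCount_eq_card_edgeFinset]
  refine ⟨by omega, fun heq ↦ ?_, ?_⟩
  · exact nonempty_iso_hgraph_or_k3join (by omega) he huv hno (by omega) (by omega) (by omega)
  · rintro (⟨⟨e⟩⟩ | ⟨rfl, ⟨e⟩⟩)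
    · rw [← edgeCount_eq_card_edgeFinset, edgeCount_congr e, edgeCount_hgraph (by omega)]
    · rw [← edgeCount_eq_card_edgeFinset, edgeCount_congr e, edgeCount_k3join_six]
      rfl
end

section
/- Let 1 ≤ a ≤ b with b ≥ 2, and let G be an n-vertex graph with n ≥ 3a+4 whose complement has at most n - ⌈a/2⌉ - 1 edges. Suppose S, T are disjoint vertex subsets with |S| ≤ |T| + 1 satisfying b|S| - a|T| + Σ_{x∈T} d_{G-S}(x) - o_G(S,T) < 2, where o_G(S,T) is the number of odd components of G - S - T (taken to be 0 if a < b). Then |T| ≤ 4. -/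
set_option maxHeartbeats 1000000

open SimpleGraph Finset
open scoped Classical

/-- The number of edges of G between the (disjoint) sets A and B. -/
noncomputable def edgesBetween {V : Type*} [Fintype V] (G : SimpleGraph V)
    (A B : Set V) : ℕ :=
  Nat.card {p : V × V // p.1 ∈ A ∧ p.2 ∈ B ∧ G.Adj p.1 p.2}

/-- The number of odd components of G - S - T: a component C is odd when
e_G(T, V(C)) + b·|V(C)| is odd. -/
noncomputable def oddComponents {V : Type*} [Fintype V] (G : SimpleGraph V) (b : ℕ)
    (S T : Finset V) : ℕ :=
  Nat.card {C : (G.induce {v : V | v ∉ S ∧ v ∉ T}).ConnectedComponent //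
    Odd (edgesBetween G (↑T) (Subtype.val '' C.supp) + b * Nat.card C.supp)}

/-- o_G(S,T): the odd-component count when a = b, and 0 when a < b. -/
noncomputable def oG {V : Type*} [Fintype V] (G : SimpleGraph V) (a b : ℕ)
    (S T : Finset V) : ℕ :=
  if a = b then oddComponents G b S T else 0

lemma deg_lower {n : ℕ} (G : SimpleGraph (Fin n)) [DecidableRel G.Adj]
    (S : Finset (Fin n)) (x : Fin n) (hx : x ∉ S) :
    n ≤ (G.neighborFinset x \ S).card + Gᶜ.degree x + S.card + 1 := by
  have hsub : univ \ insert x S ⊆ (G.neighborFinset x \ S) ∪ Gᶜ.neighborFinset x := by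
    intro v hv
    simp only [mem_sdiff, mem_univ, mem_insert, true_and, not_or] at hv
    obtain ⟨hvx, hvS⟩ := hv
    by_cases hadj : G.Adj x v
    · exact mem_union_left _ (by simp [mem_sdiff, mem_neighborFinset, hadj, hvS])
    · refine mem_union_right _ ?_
      rw [mem_neighborFinset, compl_adj]
      exact ⟨fun h => hvx h.symm, hadj⟩
  have h1 : (univ \ insert x S).card ≤ (G.neighborFinset x \ S).card + Gᶜ.degree x := by
    calc (univ \ insert x S).card ≤ ((G.neighborFinset x \ S) ∪ Gᶜ.neighborFinset x).card :=
          card_le_card hsub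
      _ ≤ _ := (card_union_le _ _).trans (by rw [SimpleGraph.degree])
  have h2 : (univ \ insert x S).card = n - (S.card + 1) := by
    rw [card_sdiff_of_subset (subset_univ _), card_univ, Fintype.card_fin, card_insert_of_notMem hx]
  have h3 : S.card + 1 ≤ n := by
    have := card_le_card (subset_univ (insert x S))
    rwa [card_insert_of_notMem hx, card_univ, Fintype.card_fin] at this
  omega

lemma oG_le {n : ℕ} (G : SimpleGraph (Fin n)) (a b : ℕ) (S T : Finset (Fin n))
    (hST : Disjoint S T) :
    oG G a b S T + S.card + T.card ≤ n := by
  have key : oddComponents G b S T ≤ n - S.card - T.card := by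
    have h1 : oddComponents G b S T ≤
        Nat.card (G.induce {v : Fin n | v ∉ S ∧ v ∉ T}).ConnectedComponent :=
      Nat.card_le_card_of_injective Subtype.val Subtype.val_injective
    have h2 : Nat.card (G.induce {v : Fin n | v ∉ S ∧ v ∉ T}).ConnectedComponent ≤
        Nat.card {v : Fin n | v ∉ S ∧ v ∉ T} :=
      Nat.card_le_card_of_surjective (G.induce {v : Fin n | v ∉ S ∧ v ∉ T}).connectedComponentMk Quot.mk_surjective
    have h3 : Nat.card {v : Fin n | v ∉ S ∧ v ∉ T} = n - S.card - T.card := by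
      rw [Nat.card_eq_fintype_card]
      have : Fintype.card {v : Fin n | v ∉ S ∧ v ∉ T} =
          (univ.filter (fun v : Fin n => v ∉ S ∧ v ∉ T)).card := Fintype.card_subtype _
      rw [this]
      have he : (univ.filter (fun v : Fin n => v ∉ S ∧ v ∉ T)) = (S ∪ T)ᶜ := by
        ext v; simp [not_or]
      rw [he, card_compl, card_union_of_disjoint hST, Fintype.card_fin]
      omega
    omega
  have h4 : S.card + T.card ≤ n := by
    have := card_le_card (subset_univ (S ∪ T))
    rwa [card_union_of_disjoint hST, card_univ, Fintype.card_fin] at this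
  unfold oG
  split <;> omega

/-- If 1 ≤ a ≤ b, b ≥ 2, n ≥ 3a+4, e(Ḡ) ≤ n - ⌈a/2⌉ - 1, S and T are disjoint with
|S| ≤ |T| + 1, and b|S| - a|T| + Σ_{x∈T} d_{G-S}(x) - o_G(S,T) < 2, then |T| ≤ 4. -/
theorem T_card_le_four {n a b : ℕ} (ha : 1 ≤ a) (hab : a ≤ b) (hb : 2 ≤ b)
    (hn : 3 * a + 4 ≤ n) (G : SimpleGraph (Fin n)) [DecidableRel G.Adj]
    (hcomp : Gᶜ.edgeFinset.card + (a + 1) / 2 + 1 ≤ n)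
    (S T : Finset (Fin n)) (hST : Disjoint S T) (hs : S.card ≤ T.card + 1)
    (hθ : (b : ℤ) * S.card - (a : ℤ) * T.card +
        ∑ x ∈ T, ((G.neighborFinset x \ S).card : ℤ) - (oG G a b S T : ℤ) < 2) :
    T.card ≤ 4 := by
  by_contra hT
  push_neg at hT
  set s : ℤ := (S.card : ℤ) with hs'
  set t : ℤ := (T.card : ℤ) with ht'
  set e : ℤ := (Gᶜ.edgeFinset.card : ℤ) with he'
  set o : ℤ := (oG G a b S T : ℤ) with ho'
  -- degree sum lower bound
  have hDsum : (t * (n - 1 - s) - 2 * e : ℤ) ≤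
      ∑ x ∈ T, ((G.neighborFinset x \ S).card : ℤ) := by
    have hdeg : ∀ x ∈ T, ((n : ℤ) - 1 - s - (Gᶜ.degree x : ℤ)) ≤
        ((G.neighborFinset x \ S).card : ℤ) := by
      intro x hxT
      have hx : x ∉ S := fun hxS => (disjoint_left.mp hST hxS) hxT
      have := deg_lower G S x hx
      push_cast [hs']
      push_cast at this ⊢
      linarith [this]
    have hsum1 : ∑ x ∈ T, ((n : ℤ) - 1 - s - (Gᶜ.degree x : ℤ)) ≤
        ∑ x ∈ T, ((G.neighborFinset x \ S).card : ℤ) := Finset.sum_le_sum hdeg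
    have hsum2 : ∑ x ∈ T, ((Gᶜ.degree x : ℤ)) ≤ 2 * e := by
      have h1 : ∑ x ∈ T, Gᶜ.degree x ≤ ∑ x : Fin n, Gᶜ.degree x :=
        Finset.sum_le_sum_of_subset (subset_univ T)
      have h2 : ∑ x : Fin n, Gᶜ.degree x = 2 * Gᶜ.edgeFinset.card := by
        rw [SimpleGraph.sum_degrees_eq_twice_card_edges]
      rw [he']
      exact_mod_cast (h1.trans_eq h2)
    have : ∑ x ∈ T, ((n : ℤ) - 1 - s - (Gᶜ.degree x : ℤ)) =
        t * ((n : ℤ) - 1 - s) - ∑ x ∈ T, ((Gᶜ.degree x : ℤ)) := by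
      rw [Finset.sum_sub_distrib, Finset.sum_const, ht']
      ring_nf
    linarith [hsum1, this, hsum2]
  have hoB : o + s + t ≤ (n : ℤ) := by
    have := oG_le G a b S T hST
    push_cast [ho', hs', ht']
    exact_mod_cast this
  have hE : 2 * e + (a : ℤ) ≤ 2 * n - 2 := by
    have hc : a ≤ 2 * ((a + 1) / 2) := by omega
    have : (Gᶜ.edgeFinset.card : ℤ) + ((a+1)/2 : ℕ) + 1 ≤ n := by exact_mod_cast hcomp
    have hc' : (a : ℤ) ≤ 2 * (((a+1)/2 : ℕ) : ℤ) := by exact_mod_cast hc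
    rw [he']; linarith
  have hsnn : (0:ℤ) ≤ s := by positivity
  have htnn : (5:ℤ) ≤ t := by rw [ht']; exact_mod_cast hT
  have hstn : s + t ≤ (n : ℤ) := by
    have h4 : S.card + T.card ≤ n := by
      have := card_le_card (subset_univ (S ∪ T))
      rwa [card_union_of_disjoint hST, card_univ, Fintype.card_fin] at this
    rw [hs', ht']; exact_mod_cast h4
  have hstI : s ≤ t + 1 := by rw [hs', ht']; exact_mod_cast hs
  have hnI : 3 * (a:ℤ) + 4 ≤ n := by exact_mod_cast hn
  have haI : (1:ℤ) ≤ a := by exact_mod_cast ha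
  have hbI : (2:ℤ) ≤ b := by exact_mod_cast hb
  have habI : (a:ℤ) ≤ b := by exact_mod_cast hab
  have honn : (0:ℤ) ≤ o := by positivity
  have henn : (0:ℤ) ≤ e := by positivity
  have hθ' : (b:ℤ) * s - (a:ℤ) * t + (t * (n - 1 - s) - 2 * e) - o < 2 := by
    rw [hs', ht'] at hθ ⊢
    linarith [hDsum, hθ]
  rcases le_or_gt ((a:ℤ) + 3) t with hcase | hcase
  · nlinarith [mul_nonneg (by linarith : (0:ℤ) ≤ t - 3) (by linarith : (0:ℤ) ≤ (n:ℤ) - s - t),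
      mul_nonneg (by linarith : (0:ℤ) ≤ t - a - 3) (by linarith : (0:ℤ) ≤ t),
      mul_nonneg (by linarith : (0:ℤ) ≤ (b:ℤ) - 2) hsnn]
  · nlinarith [mul_nonneg (by linarith : (0:ℤ) ≤ t - 3) (by linarith : (0:ℤ) ≤ t + 1 - s),
      mul_nonneg (by linarith : (0:ℤ) ≤ t - 3) (by linarith : (0:ℤ) ≤ (n:ℤ) - 3 * a - 4),
      mul_nonneg (by linarith : (0:ℤ) ≤ t - 4) (by linarith : (0:ℤ) ≤ (a:ℤ) + 2 - t),
      mul_nonneg (by linarith : (0:ℤ) ≤ t - 5) (by linarith : (0:ℤ) ≤ t - 1),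
      mul_nonneg (by linarith : (0:ℤ) ≤ (b:ℤ) - 2) hsnn]
end

section
/- Let b ≥ 2 and let G be a graph of order n ≥ 7 with δ(G) ≥ 1 whose complement has at most n - 1 edges. Then G is [1,b]-covered: every edge of G lies in a spanning subgraph F with 1 ≤ d_F(v) ≤ b for all vertices v. -/
open SimpleGraph Finset
open scoped Classical

/-- There is an [a,b]-factor of G (a spanning subgraph F with a ≤ d_F(v) ≤ b for all v)
containing the edge uv. -/
def HasABFactorThrough {V : Type*} [Fintype V] (G : SimpleGraph V) (a b : ℕ)
    (u v : V) : Prop :=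
  ∃ F : SimpleGraph V, F ≤ G ∧ F.Adj u v ∧
    ∀ w : V, a ≤ (F.neighborSet w).ncard ∧ (F.neighborSet w).ncard ≤ b

/-- G is [a,b]-covered: every edge of G lies in some [a,b]-factor. -/
def IsABCovered {V : Type*} [Fintype V] (G : SimpleGraph V) (a b : ℕ) : Prop :=
  ∀ u v : V, G.Adj u v → HasABFactorThrough G a b u v

/-!
Extend `uv` to a maximal matching `M`. The unmatched vertices `U` are independent in `G`, i.e. a
clique of `Gᶜ`, so `|U|` is small. Hall's condition holds for `U` in `G`: the vertices of a
violating set `A ⊆ U` have fewer than `|A|` neighbours, so `Gᶜ` would have too many edges at `A`.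
Hence the unmatched vertices can be joined injectively to neighbours, which are matched; adding
these edges to `M` gives a factor in which every degree is `1` or `2`.
-/

/-- For a set `A` of size `a` in a clique `U` of size `u` of `Gᶜ` whose `G`-neighbourhood has at
most `a - 1` vertices, the right-hand side bounds from below the edges of `Gᶜ` inside `A` and
from `A` to the vertices outside `A` and its neighbourhood.
Parity is what rules out `n = 7`, `a = u = 4`. -/
lemma Nat.sub_one_lt_choose_two_add_mul {n a u : ℕ} (hn : 7 ≤ n) (ha : 2 ≤ a) (hau : a ≤ u)
    (hpar : Even (n - u)) (hu : u.choose 2 ≤ n - 1) :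
    n - 1 < a.choose 2 + a * (n + 1 - 2 * a) := by
  have two_mul_choose (m : ℕ) : 2 * m.choose 2 = m * (m - 1) := by
    rw [Nat.choose_two_right, Nat.mul_div_cancel' (Nat.even_mul_pred_self m).two_dvd]
  by_contra! h
  have hu2 : u * (u - 1) ≤ 2 * (n - 1) := two_mul_choose u ▸ by omega
  have ha2 : a * (a - 1) ≤ u * (u - 1) := Nat.mul_le_mul hau (by omega)
  rcases le_or_gt (2 * a) (n + 1) with h1 | h1
  · obtain ⟨p, rfl⟩ : ∃ p, a = p + 1 := ⟨a - 1, by omega⟩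
    obtain ⟨d, rfl⟩ : ∃ d, n = 2 * p + d + 1 := ⟨n - 1 - 2 * p, by omega⟩
    have hd : 2 * p + d + 1 + 1 - 2 * (p + 1) = d := by omega
    have h2 := two_mul_choose (p + 1)
    simp only [hd, Nat.add_sub_cancel] at h h2 hu2
    have hpd : p + 2 * d ≤ 3 := by nlinarith
    have hu4 : u ≤ 4 := by
      by_contra! hu5
      have : 5 * 4 ≤ u * (u - 1) := Nat.mul_le_mul hu5 (by omega)
      omega
    rw [Nat.even_iff] at hpar
    omega
  · have : a * (a - 1) < a * 4 := by rw [← two_mul_choose]; omega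
    have : a - 1 < 4 := Nat.lt_of_mul_lt_mul_left this
    omega

namespace SimpleGraph

variable {V : Type*} {G : SimpleGraph V}

lemma exists_isMatching_adj_isIndepSet_compl [Finite V] {u v : V} (huv : G.Adj u v) :
    ∃ M : G.Subgraph, M.IsMatching ∧ M.Adj u v ∧ G.IsIndepSet M.vertsᶜ := by
  obtain ⟨M, ⟨hM, hMuv⟩, hmax⟩ :=
    Set.exists_max_image {M : G.Subgraph | M.IsMatching ∧ M.Adj u v} (fun M ↦ M.verts.ncard)
      (Set.toFinite _) ⟨_, Subgraph.IsMatching.subgraphOfAdj huv, by simp⟩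
  refine ⟨M, hM, hMuv, fun x hx y hy _ hxy ↦ ?_⟩
  have hM' : (M ⊔ G.subgraphOfAdj hxy).IsMatching := by
    refine hM.sup (.subgraphOfAdj hxy) ?_
    rw [hM.support_eq_verts, support_subgraphOfAdj, Set.disjoint_insert_right,
      Set.disjoint_singleton_right]
    exact ⟨hx, hy⟩
  have hlt : M.verts ⊂ (M ⊔ G.subgraphOfAdj hxy).verts :=
    (Set.ssubset_iff_of_subset Set.subset_union_left).mpr ⟨x, by simp, hx⟩
  exact (hmax _ ⟨hM', Or.inl hMuv⟩).not_gt (Set.ncard_lt_ncard hlt)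

lemma ncard_neighborSet_fromRel_mem_Icc [Finite V] (q : V → V) (hq : ∀ x, q x ≠ x)
    (hfiber : ∀ x y, q x = q y → x ≠ q (q x) → y ≠ q (q x) → x = y) (w : V) :
    ((fromRel fun x y ↦ q x = y).neighborSet w).ncard ∈ Set.Icc 1 2 := by
  set F := fromRel fun x y ↦ q x = y
  have hqw : q w ∈ F.neighborSet w := by simp [F, (hq w).symm]
  have hsub : F.neighborSet w ⊆ insert (q w) {x | q x = w ∧ x ≠ q w} := by
    intro x
    simp only [F, mem_neighborSet, fromRel_adj, Set.mem_insert_iff, Set.mem_ofPred_eq]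
    tauto
  have hfib : {x | q x = w ∧ x ≠ q w}.Subsingleton := by
    rintro x ⟨rfl, hx⟩ y ⟨hy, hy'⟩
    exact hfiber x y hy.symm hx (hy ▸ hy')
  refine ⟨(Set.ncard_pos).mpr ⟨_, hqw⟩, ?_⟩
  calc _ ≤ (insert (q w) {x | q x = w ∧ x ≠ q w}).ncard := Set.ncard_le_ncard hsub
    _ ≤ {x | q x = w ∧ x ≠ q w}.ncard + 1 := Set.ncard_insert_le _ _
    _ ≤ 2 := by have := Set.ncard_le_one_iff_subsingleton.mpr hfib; omega

lemma IsClique.choose_two_add_sum_card_neighborFinset_sdiff_le [Fintype V] [DecidableEq V]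
    [DecidableRel G.Adj] {A : Finset V} (hA : G.IsClique (A : Set V)) :
    (#A).choose 2 + ∑ w ∈ A, #(G.neighborFinset w \ A) ≤ #G.edgeFinset := by
  set inner := A.offDiag.image (Function.uncurry Sym2.mk)
  set cross := (A.sigma fun w ↦ G.neighborFinset w \ A).image fun p ↦ s(p.1, p.2)
  have hcross : #cross = ∑ w ∈ A, #(G.neighborFinset w \ A) := by
    rw [← card_sigma]
    refine card_image_of_injOn ?_
    rintro ⟨x, y⟩ hxy ⟨x', y'⟩ hxy' h
    simp only [coe_sigma, Set.mem_sigma_iff, mem_coe, mem_sdiff] at hxy hxy'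
    rcases Sym2.eq_iff.mp h with ⟨rfl, rfl⟩ | ⟨rfl, rfl⟩
    · rfl
    · exact absurd hxy.1 hxy'.2.2
  have hdisj : Disjoint inner cross := by
    refine Finset.disjoint_left.mpr fun e he he' ↦ ?_
    obtain ⟨⟨x, y⟩, hxy, rfl⟩ := mem_image.mp he
    obtain ⟨⟨x', y'⟩, hxy', h⟩ := mem_image.mp he'
    simp only [mem_offDiag, mem_sigma, mem_sdiff] at hxy hxy'
    obtain ⟨hx, hy, -⟩ := hxy
    obtain ⟨hx', -, hy'⟩ := hxy'
    rcases Sym2.eq_iff.mp h with ⟨rfl, rfl⟩ | ⟨rfl, rfl⟩ <;> contradiction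
  have hsub : inner ∪ cross ⊆ G.edgeFinset := by
    simp only [inner, cross, union_subset_iff, image_subset_iff, mem_offDiag, mem_sigma, mem_sdiff,
      mem_neighborFinset, mem_edgeFinset, mem_edgeSet]
    exact ⟨fun p ⟨hx, hy, hxy⟩ ↦ hA hx hy hxy, fun p ⟨_, hadj, _⟩ ↦ hadj⟩
  rw [← Sym2.card_image_offDiag, ← hcross, ← card_union_of_disjoint hdisj]
  exact card_le_card hsub

lemma exists_injOn_adj_of_forall_card_le [Fintype V] [DecidableEq V] [DecidableRel G.Adj]
    {U : Finset V} (h : ∀ A ⊆ U, #A ≤ #(A.biUnion fun w ↦ G.neighborFinset w)) :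
    ∃ f : V → V, Set.InjOn f U ∧ ∀ w ∈ U, G.Adj w (f w) := by
  obtain ⟨f, hinj, hf⟩ := (all_card_le_biUnion_card_iff_exists_injective
    fun w : U ↦ G.neighborFinset w).mp fun s ↦ by
      have := h (s.image Subtype.val) fun x hx ↦ by
        obtain ⟨y, -, rfl⟩ := mem_image.mp hx
        exact y.2
      rwa [card_image_of_injective _ Subtype.val_injective, image_biUnion] at this
  refine ⟨fun w ↦ if hw : w ∈ U then f ⟨w, hw⟩ else w, fun x hx y hy hxy ↦ ?_, fun w hw ↦ ?_⟩
  · simp only [mem_coe] at hx hy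
    simp only [hx, hy, dite_true] at hxy
    exact congrArg Subtype.val (hinj hxy)
  · simpa [hw] using hf ⟨w, hw⟩

lemma hasABFactorThrough_of_isMatching [Fintype V] {M : G.Subgraph} (hM : M.IsMatching)
    {u v : V} (huv : M.Adj u v) (f : V → V) (hinj : Set.InjOn f M.vertsᶜ)
    (hf : ∀ w ∉ M.verts, G.Adj w (f w)) {b : ℕ} (hb : 2 ≤ b) :
    HasABFactorThrough G 1 b u v := by
  set q : V → V := fun w ↦ if hw : w ∈ M.verts then (hM hw).exists.choose else f w
  have hqM : ∀ w ∈ M.verts, M.Adj w (q w) := fun w hw ↦ by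
    simpa only [q, dif_pos hw] using (hM hw).exists.choose_spec
  have hqG : ∀ w, G.Adj w (q w) := fun w ↦ by
    by_cases hw : w ∈ M.verts
    · exact M.adj_sub (hqM w hw)
    · simpa only [q, dif_neg hw] using hf w hw
  have hqq : ∀ x ∈ M.verts, q (q x) = x := fun x hx ↦
    hM.eq_of_adj_left (hqM _ (M.edge_vert (hqM x hx).symm)) (hqM x hx).symm
  have hfiber : ∀ x y, q x = q y → x ≠ q (q x) → y ≠ q (q x) → x = y := by
    intro x y hxy hx hy
    have hxU : x ∉ M.verts := fun hxM ↦ hx (hqq x hxM).symm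
    have hyU : y ∉ M.verts := fun hyM ↦ hy (hxy ▸ hqq y hyM).symm
    simp only [q, dif_neg hxU, dif_neg hyU] at hxy
    exact hinj hxU hyU hxy
  refine ⟨fromRel fun x y ↦ q x = y, ?_, ?_, fun w ↦ ?_⟩
  · rintro x y ⟨-, rfl | rfl⟩
    exacts [hqG x, (hqG y).symm]
  · exact (fromRel_adj _ u v).mpr
      ⟨huv.ne, .inl (hM.eq_of_adj_left (hqM u (M.edge_vert huv)) huv)⟩
  · have := ncard_neighborSet_fromRel_mem_Icc q (fun x ↦ (hqG x).ne') hfiber w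
    exact ⟨this.1, this.2.trans hb⟩

lemma card_le_card_biUnion_neighborFinset_of_isIndepSet [Fintype V] [DecidableEq V]
    [DecidableRel G.Adj] (hV : 7 ≤ Fintype.card V) (hδ : 1 ≤ G.minDegree)
    (hcompl : #Gᶜ.edgeFinset ≤ Fintype.card V - 1) {U : Finset V} (hU : G.IsIndepSet U)
    (hpar : Even (Fintype.card V - #U)) {A : Finset V} (hAU : A ⊆ U) :
    #A ≤ #(A.biUnion fun w ↦ G.neighborFinset w) := by
  by_contra! hlt
  set N := A.biUnion fun w ↦ G.neighborFinset w
  have hUcl : Gᶜ.IsClique (U : Set V) := (isClique_compl G).mpr hU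
  obtain ⟨w, hw⟩ : A.Nonempty := card_pos.mp (by omega)
  have hN : 1 ≤ #N := (hδ.trans (G.minDegree_le_degree w)).trans
    (card_le_card (subset_biUnion_of_mem (fun w ↦ G.neighborFinset w) hw))
  have hcross : ∀ x ∈ A, Fintype.card V + 1 - 2 * #A ≤ #(Gᶜ.neighborFinset x \ A) := by
    intro x hx
    have hsub : Aᶜ \ N ⊆ Gᶜ.neighborFinset x \ A := by
      intro y hy
      simp only [mem_sdiff, mem_compl] at hy
      refine mem_sdiff.mpr ⟨(mem_neighborFinset _ _ _).mpr ((compl_adj G x y).mpr ⟨?_, ?_⟩), hy.1⟩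
      · rintro rfl
        exact hy.1 hx
      · exact fun hxy ↦ hy.2 (mem_biUnion.mpr ⟨x, hx, (mem_neighborFinset _ _ _).mpr hxy⟩)
    have := card_le_card hsub
    have := le_card_sdiff N Aᶜ
    rw [card_compl] at this
    omega
  have hA := (hUcl.subset (coe_subset.mpr hAU)).choose_two_add_sum_card_neighborFinset_sdiff_le
  have hU := hUcl.choose_two_add_sum_card_neighborFinset_sdiff_le
  have hsum := card_nsmul_le_sum A _ _ hcross
  rw [smul_eq_mul] at hsum
  have := Nat.sub_one_lt_choose_two_add_mul hV (by omega) (card_le_card hAU) hpar (by omega)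
  omega

end SimpleGraph

/-- If b ≥ 2, n ≥ 7, δ(G) ≥ 1 and e(Ḡ) ≤ n - 1, then G is [1,b]-covered. -/
theorem oneBCovered_of_complement_small {n b : ℕ} (hb : 2 ≤ b) (hn : 7 ≤ n)
    (G : SimpleGraph (Fin n)) [DecidableRel G.Adj] (hδ : 1 ≤ G.minDegree)
    (hcomp : Gᶜ.edgeFinset.card ≤ n - 1) :
    IsABCovered G 1 b := by
  intro u v huv
  obtain ⟨M, hM, hMuv, hind⟩ := exists_isMatching_adj_isIndepSet_compl huv
  set U := M.verts.toFinsetᶜ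
  have hU : (U : Set (Fin n)) = M.vertsᶜ := by simp [U]
  have hpar : Even (Fintype.card (Fin n) - #U) := by
    rw [card_compl, Nat.sub_sub_self (card_le_univ _)]
    exact hM.even_card
  obtain ⟨f, hinj, hf⟩ := exists_injOn_adj_of_forall_card_le fun A hAU ↦
    card_le_card_biUnion_neighborFinset_of_isIndepSet (by simpa) hδ (by simpa) (hU ▸ hind) hpar
      hAU
  exact hasABFactorThrough_of_isMatching hM hMuv f (hU ▸ hinj)
    (fun w hw ↦ hf w (by simpa [U] using hw)) hb
end
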